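/- arXiv:1605.05056 — 2 statements merged into one kernel-verified Lean document; each statement's English description precedes it below -/
import Mathlib

section
/- The graph F2 satisfies γ_e(F2) < γ(F2). -/
open SimpleGraph

/-- `D` is a dominating set of `G`. -/
def IsDomSet {V : Type*} (G : SimpleGraph V) (D : Finset V) : Prop :=
  ∀ v : V, v ∉ D → ∃ u ∈ D, G.Adj u v

/-- The domination number of `G`. -/
noncomputable def domNum {V : Type*} (G : SimpleGraph V) [Fintype V] : ℕ :=
  sInf {n | ∃ D : Finset V, IsDomSet G D ∧ D.card = n}

open Classical in
/-- `D` contains exactly one endvertex of a path between `u` and `v`. -/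
def endCond {V : Type*} (D : Finset V) (u v : V) : Prop :=
  if u = v then u ∈ D else ((u ∈ D ∧ v ∉ D) ∨ (u ∉ D ∧ v ∈ D))

/-- `dist_{(G,D)}(u,v)`: the minimum length of a path in `G` between `u` and `v` such
that `D` contains exactly one endvertex and no internal vertex of the path;
`⊤` if no such path exists. -/
noncomputable def eDist {V : Type*} (G : SimpleGraph V) (D : Finset V) (u v : V) : ℕ∞ :=
  ⨅ (p : {p : G.Walk u v // p.IsPath ∧ endCond D u v ∧
      ∀ w ∈ p.support, w ≠ u → w ≠ v → w ∉ D}), (p.1.length : ℕ∞)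

/-- `(1/2)^(d-1)` for `d : ℕ∞`, with `(1/2)^∞ = 0`. -/
noncomputable def halfPow (d : ℕ∞) : ℝ :=
  if d = ⊤ then 0 else 2 * (1 / 2 : ℝ) ^ d.toNat

/-- The weight `w_{(G,D)}(u)`. -/
noncomputable def expWeight {V : Type*} (G : SimpleGraph V) (D : Finset V) (u : V) : ℝ :=
  ∑ v ∈ D, halfPow (eDist G D u v)

/-- `D` is an exponential dominating set of `G`. -/
def IsExpDomSet {V : Type*} (G : SimpleGraph V) (D : Finset V) : Prop :=
  ∀ u : V, 1 ≤ expWeight G D u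

/-- The exponential domination number of `G`. -/
noncomputable def expDomNum {V : Type*} (G : SimpleGraph V) [Fintype V] : ℕ :=
  sInf {n | ∃ D : Finset V, IsExpDomSet G D ∧ D.card = n}

/-- `G` is `H`-free: `G` has no induced subgraph isomorphic to `H`. -/
def Free {V W : Type*} (G : SimpleGraph V) (H : SimpleGraph W) : Prop :=
  ¬ Nonempty (H ↪g G)

/-- The graph on `Fin n` with the given edge list. -/
def graphOfList (n : ℕ) (l : List (Fin n × Fin n)) : SimpleGraph (Fin n) :=
  SimpleGraph.fromRel (fun a b => (a, b) ∈ l)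

/-- The bull `B`. -/
def bull : SimpleGraph (Fin 5) := graphOfList 5 [(0,1),(1,2),(0,2),(0,3),(1,4)]
/-- The diamond `D` (`K₄` minus an edge). -/
def diamond : SimpleGraph (Fin 4) := graphOfList 4 [(0,1),(0,2),(0,3),(1,2),(1,3)]
/-- The complete graph `K₄`. -/
def K4 : SimpleGraph (Fin 4) := ⊤
/-- The complete bipartite graph `K_{2,3}` with parts `{0,1}` and `{2,3,4}`. -/
def K23 : SimpleGraph (Fin 5) := graphOfList 5 [(0,2),(0,3),(0,4),(1,2),(1,3),(1,4)]
/-- The 2×3 grid `P₂ □ P₃`. -/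
def P2P3 : SimpleGraph (Fin 2 × Fin 3) := (pathGraph 2) □ (pathGraph 3)
/-- The path on 7 vertices. -/
def P7 : SimpleGraph (Fin 7) := pathGraph 7
/-- The cycle on 7 vertices. -/
def C7 : SimpleGraph (Fin 7) := cycleGraph 7
/-- `F₁`: the path `0-1-2` with pendant vertices `3,4,5` attached to `0,1,2`. -/
def F1 : SimpleGraph (Fin 6) := graphOfList 6 [(0,1),(1,2),(0,3),(1,4),(2,5)]
/-- `F₂`: a 4-cycle with a pendant path on 3 new vertices. -/
def F2 : SimpleGraph (Fin 7) := graphOfList 7 [(0,1),(1,2),(2,3),(3,0),(0,4),(4,5),(5,6)]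
/-- `F₃`: a 4-cycle `0-1-2-3` and a 5-cycle `1-2-4-5-6` sharing exactly the edge `1-2`. -/
def F3 : SimpleGraph (Fin 7) := graphOfList 7 [(0,1),(1,2),(2,3),(3,0),(2,4),(4,5),(5,6),(6,1)]
/-- `F₄`: two 4-cycles sharing exactly the vertex `0`. -/
def F4 : SimpleGraph (Fin 7) := graphOfList 7 [(0,1),(1,2),(2,3),(3,0),(0,4),(4,5),(5,6),(6,0)]
/-- `F₅`: vertices `u=0, v₁=1, v₂=2, w=3, a=4, b=5, z=6`. -/
def F5 : SimpleGraph (Fin 7) := graphOfList 7 [(0,1),(0,2),(1,3),(2,3),(1,4),(4,5),(5,2),(3,6)]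

/-! Exponential domination: `{2, 5}` (a vertex of the 4-cycle opposite the attachment vertex `0`,
and the middle vertex of the pendant path) already gives every vertex weight at least `1`: each
vertex other than `0` is in the set or adjacent to it, and `0` is at distance `2` from both, receiving
`1/2 + 1/2`. Ordinary domination needs three vertices, which a check over all subsets confirms. -/

lemma halfPow_nonneg (d : ℕ∞) : 0 ≤ halfPow d := by
  unfold halfPow
  split_ifs <;> positivity

lemma two_mul_half_pow_le_halfPow {d : ℕ∞} {n : ℕ} (h : d ≤ n) :
    2 * (1 / 2 : ℝ) ^ n ≤ halfPow d := by
  rw [halfPow, if_neg (ne_top_of_le_ne_top (ENat.natCast_ne_top n) h)]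
  have := pow_le_pow_of_le_one (by norm_num : (0 : ℝ) ≤ 1 / 2) (by norm_num)
    (ENat.toNat_le_of_le_natCast h)
  linarith

section ExpWeight

variable {V : Type*} {G : SimpleGraph V} {D : Finset V} {u v v' w : V}

lemma eDist_le_length (p : G.Walk u v) (hp : p.IsPath) (hend : endCond D u v)
    (hint : ∀ w ∈ p.support, w ≠ u → w ≠ v → w ∉ D) : eDist G D u v ≤ p.length :=
  iInf_le (fun q : {p : G.Walk u v // p.IsPath ∧ endCond D u v ∧
      ∀ w ∈ p.support, w ≠ u → w ≠ v → w ∉ D} => (q.1.length : ℕ∞)) ⟨p, hp, hend, hint⟩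

lemma endCond_of_notMem_of_mem (hu : u ∉ D) (hv : v ∈ D) : endCond D u v := by
  have huv : u ≠ v := by rintro rfl; exact hu hv
  simp only [endCond, if_neg huv]
  exact Or.inr ⟨hu, hv⟩

lemma eDist_self_eq_zero (hu : u ∈ D) : eDist G D u u = 0 := by
  refine nonpos_iff_eq_zero.mp ?_
  simpa using eDist_le_length (G := G) Walk.nil Walk.IsPath.nil (by simpa [endCond] using hu)
    (by simp)

lemma eDist_le_one_of_adj (h : G.Adj u v) (hu : u ∉ D) (hv : v ∈ D) : eDist G D u v ≤ 1 := by
  simpa using eDist_le_length h.toWalk (by simpa using h.ne) (endCond_of_notMem_of_mem hu hv)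
    (by simp +contextual)

lemma eDist_le_two_of_adj_of_adj (huw : G.Adj u w) (hwv : G.Adj w v) (hu : u ∉ D) (hw : w ∉ D)
    (hv : v ∈ D) : eDist G D u v ≤ 2 := by
  have huv : u ≠ v := by rintro rfl; exact hu hv
  simpa using eDist_le_length (.cons huw hwv.toWalk)
    (by simp [huw.ne, hwv.ne, huv]) (endCond_of_notMem_of_mem hu hv)
    (fun x hx hxu hxv => by simp_all)

lemma halfPow_eDist_le_expWeight (u : V) (hv : v ∈ D) :
    halfPow (eDist G D u v) ≤ expWeight G D u :=
  Finset.single_le_sum (fun _ _ => halfPow_nonneg _) hv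

lemma one_le_expWeight_of_mem (hu : u ∈ D) : 1 ≤ expWeight G D u :=
  calc (1 : ℝ) ≤ halfPow (eDist G D u u) := by rw [eDist_self_eq_zero hu]; norm_num [halfPow]
    _ ≤ expWeight G D u := halfPow_eDist_le_expWeight u hu

lemma one_le_expWeight_of_adj (h : G.Adj u v) (hu : u ∉ D) (hv : v ∈ D) :
    1 ≤ expWeight G D u :=
  calc (1 : ℝ) = 2 * (1 / 2) ^ 1 := by norm_num
    _ ≤ halfPow (eDist G D u v) := two_mul_half_pow_le_halfPow (eDist_le_one_of_adj h hu hv)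
    _ ≤ expWeight G D u := halfPow_eDist_le_expWeight u hv

lemma one_le_expWeight_of_eDist_le_two (hv : v ∈ D) (hv' : v' ∈ D) (hne : v ≠ v')
    (h : eDist G D u v ≤ 2) (h' : eDist G D u v' ≤ 2) : 1 ≤ expWeight G D u := by
  classical
  have hpair : halfPow (eDist G D u v) + halfPow (eDist G D u v') ≤ expWeight G D u := by
    rw [← Finset.sum_pair (f := fun x => halfPow (eDist G D u x)) hne]
    exact Finset.sum_le_sum_of_subset_of_nonneg (by simp [Finset.insert_subset_iff, hv, hv'])
      (fun _ _ _ => halfPow_nonneg _)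
  have hv_half := two_mul_half_pow_le_halfPow h
  have hv'_half := two_mul_half_pow_le_halfPow h'
  norm_num at hv_half hv'_half
  linarith

end ExpWeight

section DominationNumbers

variable {V : Type*} [Fintype V] {G : SimpleGraph V}

lemma expDomNum_le_card {D : Finset V} (hD : IsExpDomSet G D) : expDomNum G ≤ D.card :=
  Nat.sInf_le ⟨D, hD, rfl⟩

lemma le_domNum {k : ℕ} (h : ∀ D, IsDomSet G D → k ≤ D.card) : k ≤ domNum G := by
  classical
  refine le_csInf ⟨_, Finset.univ, fun v hv => absurd (Finset.mem_univ v) hv, rfl⟩ ?_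
  rintro n ⟨D, hD, rfl⟩
  exact h D hD

end DominationNumbers

instance : DecidableRel F2.Adj := inferInstanceAs (DecidableRel (fromRel _).Adj)

lemma isExpDomSet_F2 : IsExpDomSet F2 {2, 5} := by
  intro u
  fin_cases u
  · exact one_le_expWeight_of_eDist_le_two (v := 2) (v' := 5) (by decide) (by decide) (by decide)
      (eDist_le_two_of_adj_of_adj (w := 1) (by decide) (by decide) (by decide) (by decide)
        (by decide))
      (eDist_le_two_of_adj_of_adj (w := 4) (by decide) (by decide) (by decide) (by decide)
        (by decide))
  · exact one_le_expWeight_of_adj (v := 2) (by decide) (by decide) (by decide)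
  · exact one_le_expWeight_of_mem (by decide)
  · exact one_le_expWeight_of_adj (v := 2) (by decide) (by decide) (by decide)
  · exact one_le_expWeight_of_adj (v := 5) (by decide) (by decide) (by decide)
  · exact one_le_expWeight_of_mem (by decide)
  · exact one_le_expWeight_of_adj (v := 5) (by decide) (by decide) (by decide)

set_option maxRecDepth 10000 in
lemma three_le_card_of_isDomSet_F2 : ∀ D, IsDomSet F2 D → 3 ≤ D.card := by
  unfold IsDomSet
  decide

/-- `γₑ(F₂) < γ(F₂)`. -/
theorem expDomNum_F2_lt_domNum_F2 : expDomNum F2 < domNum F2 := by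
  calc expDomNum F2 ≤ 2 := expDomNum_le_card isExpDomSet_F2
    _ < 3 := by norm_num
    _ ≤ domNum F2 := le_domNum three_le_card_of_isDomSet_F2
end

section
/- Let G be a finite connected simple graph that is {B, D, K4, K_{2,3}, P2□P3, P7, C7, F1, F2, F3, F4, F5}-free and has γ(G) ≥ 3. Then every triangle of G contains at least two vertices whose degree in G is exactly 2. -/
open SimpleGraph

/-!
Suppose two vertices `x₁, x₂` of a triangle `x₁x₂x₃` have neighbours `y₁, y₂` outside it.
Freeness of the bull, the diamond, `K₄` and `K₂,₃` forces `y₁ ~ y₂`, `N(x₁) = {x₂, x₃, y₁}` and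
`N(x₂) = {x₁, x₃, y₂}`. If `y₁` and `y₂` have a common neighbour `s`, the two triangles
`x₁x₂x₃` and `y₁y₂s` are the whole graph, and `{y₁, x₂}` dominates it. Otherwise `x₃` has
degree `2`, so `x₁y₁y₂x₂` is a house with roof `x₃`, and `P₂□P₃`- and `F₁`-freeness leave
one of `y₁, y₂`, say `y₂`, without neighbours outside the house. Now `y₁` is the only exit
from the house, so `P₇`-freeness puts every vertex within distance two of `y₁`; by `F₁`- and
`F₄`-freeness the vertices at distance two all hang from a single neighbour `s` of `y₁`, and
`{y₁, x₂}` or `{s, x₂}` dominates the graph, against `γ(G) ≥ 3`.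
-/

section

variable {V : Type*} {G : SimpleGraph V}

theorem Free.false_of_map {W : Type*} {H : SimpleGraph W} (hH : _root_.Free G H) (f : W → V)
    (hf : ∀ i j, i ≠ j → f i ≠ f j ∧ (G.Adj (f i) (f j) ↔ H.Adj i j)) : False := by
  refine hH ⟨⟨⟨f, fun i j hij => ?_⟩, fun {i j} => ?_⟩⟩
  · by_contra h
    exact (hf i j h).1 hij
  · by_cases h : i = j
    · subst h
      simp
    · exact (hf i j h).2

theorem SimpleGraph.Connected.mem_of_neighborSet_subset (hG : G.Connected) {S : Set V} {a : V}
    (ha : a ∈ S) (hS : ∀ u ∈ S, G.neighborSet u ⊆ S) (v : V) : v ∈ S := by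
  by_contra hv
  obtain ⟨d, -, hd, hd'⟩ := (hG.preconnected a v).some.exists_boundary_dart S ha hv
  exact hd' (hS _ hd d.adj)

theorem domNum_le_card [Fintype V] {D : Finset V} (hD : IsDomSet G D) : domNum G ≤ D.card :=
  Nat.sInf_le ⟨D, hD, rfl⟩

theorem domNum_le_two [Fintype V] {a b : V} (h : ∀ v, v = a ∨ v = b ∨ G.Adj a v ∨ G.Adj b v) :
    domNum G ≤ 2 := by
  classical
  refine (domNum_le_card fun v hv => ?_).trans (Finset.card_le_two (a := a) (b := b))
  simp only [Finset.mem_insert, Finset.mem_singleton, not_or] at hv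
  rcases h v with rfl | rfl | h | h
  · exact absurd rfl hv.1
  · exact absurd rfl hv.2
  · exact ⟨a, by simp, h⟩
  · exact ⟨b, by simp, h⟩

theorem eq_of_adj_of_adj_of_triangle (hDia : _root_.Free G diamond) (hK4 : _root_.Free G K4)
    {a b c v : V} (hab : G.Adj a b) (hac : G.Adj a c) (hbc : G.Adj b c) (hav : G.Adj a v)
    (hbv : G.Adj b v) : v = c := by
  by_contra hvc
  by_cases hcv : G.Adj c v
  · refine hK4.false_of_map ![a, b, c, v] fun i j hij => ?_
    fin_cases i <;> fin_cases j <;> simp [K4] at hij ⊢ <;> grind [Adj.ne, Adj.symm]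
  · refine hDia.false_of_map ![a, b, c, v] fun i j hij => ?_
    fin_cases i <;> fin_cases j <;> simp [diamond, graphOfList] at hij ⊢ <;>
      grind [Adj.ne, Adj.symm]

theorem adj_of_triangle_pendants (hB : _root_.Free G bull) (hDia : _root_.Free G diamond)
    (hK4 : _root_.Free G K4) {a b c p q : V} (hab : G.Adj a b) (hac : G.Adj a c)
    (hbc : G.Adj b c) (hap : G.Adj a p) (hpb : p ≠ b) (hpc : p ≠ c) (hbq : G.Adj b q)
    (hqa : q ≠ a) (hqc : q ≠ c) : G.Adj p q := by
  by_contra hpq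
  have hbp : ¬G.Adj b p := fun h => hpc (eq_of_adj_of_adj_of_triangle hDia hK4 hab hac hbc hap h)
  have hcp : ¬G.Adj c p := fun h =>
    hpb (eq_of_adj_of_adj_of_triangle hDia hK4 hac hab hbc.symm hap h)
  have haq : ¬G.Adj a q := fun h =>
    hqc (eq_of_adj_of_adj_of_triangle hDia hK4 hab.symm hbc hac hbq h)
  have hcq : ¬G.Adj c q := fun h =>
    hqa (eq_of_adj_of_adj_of_triangle hDia hK4 hbc hab.symm hac.symm hbq h)
  refine hB.false_of_map ![a, b, c, p, q] fun i j hij => ?_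
  fin_cases i <;> fin_cases j <;> simp [bull, graphOfList] at hij ⊢ <;> grind [Adj.ne, Adj.symm]

theorem neighborSet_subset_of_triangle_pendants (hB : _root_.Free G bull)
    (hDia : _root_.Free G diamond) (hK4 : _root_.Free G K4) (hK23 : _root_.Free G K23)
    {a b c p q : V} (hab : G.Adj a b) (hac : G.Adj a c) (hbc : G.Adj b c) (hap : G.Adj a p)
    (hpb : p ≠ b) (hpc : p ≠ c) (hbq : G.Adj b q) (hqa : q ≠ a) (hqc : q ≠ c) :
    G.neighborSet a ⊆ {b, c, p} := by
  intro p' (hap' : G.Adj a p')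
  by_contra hp'
  simp only [Set.mem_insert_iff, Set.mem_singleton_iff, not_or] at hp'
  obtain ⟨hp'b, hp'c, hp'p⟩ := hp'
  have hpq := adj_of_triangle_pendants hB hDia hK4 hab hac hbc hap hpb hpc hbq hqa hqc
  have hp'q := adj_of_triangle_pendants hB hDia hK4 hab hac hbc hap' hp'b hp'c hbq hqa hqc
  have hpp' : ¬G.Adj p p' := fun h =>
    hqa (eq_of_adj_of_adj_of_triangle hDia hK4 h hap.symm hap'.symm hpq hp'q)
  have haq : ¬G.Adj a q := fun h =>
    hqc (eq_of_adj_of_adj_of_triangle hDia hK4 hab.symm hbc hac hbq h)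
  have hbp : ¬G.Adj b p := fun h => hpc (eq_of_adj_of_adj_of_triangle hDia hK4 hab hac hbc hap h)
  have hbp' : ¬G.Adj b p' := fun h =>
    hp'c (eq_of_adj_of_adj_of_triangle hDia hK4 hab hac hbc hap' h)
  refine hK23.false_of_map ![a, q, p, p', b] fun i j hij => ?_
  fin_cases i <;> fin_cases j <;> simp [K23, graphOfList] at hij ⊢ <;> grind [Adj.ne, Adj.symm]

theorem neighborSet_subset_of_adj_triangles (hB : _root_.Free G bull)
    (hDia : _root_.Free G diamond) (hK4 : _root_.Free G K4) (hK23 : _root_.Free G K23)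
    {x₁ x₂ x₃ y₁ y₂ y₃ : V} (h₁₂ : G.Adj x₁ x₂) (h₁₃ : G.Adj x₁ x₃) (h₂₃ : G.Adj x₂ x₃)
    (hy₁₂ : G.Adj y₁ y₂) (hy₁₃ : G.Adj y₁ y₃) (hy₂₃ : G.Adj y₂ y₃)
    (h₁ : G.Adj x₁ y₁) (h₂ : G.Adj x₂ y₂) (hne₁₂ : y₁ ≠ x₂) (hne₁₃ : y₁ ≠ x₃) (hne₂₁ : y₂ ≠ x₁)
    (hne₃₁ : y₃ ≠ x₁) (hne₃₂ : y₃ ≠ x₂) : G.neighborSet x₃ ⊆ {x₁, x₂, y₃} := by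
  intro w (hw : G.Adj x₃ w)
  by_contra hw'
  simp only [Set.mem_insert_iff, Set.mem_singleton_iff, not_or] at hw'
  have hwy : G.Adj y₁ w := (adj_of_triangle_pendants hB hDia hK4 h₁₃.symm h₂₃.symm h₁₂ hw
    hw'.1 hw'.2.1 h₁ hne₁₃ hne₁₂).symm
  have N : G.neighborSet y₁ ⊆ {y₂, y₃, x₁} := neighborSet_subset_of_triangle_pendants
    hB hDia hK4 hK23 hy₁₂ hy₁₃ hy₂₃ h₁.symm hne₂₁.symm hne₃₁.symm h₂.symm hne₁₂.symm hne₃₂.symm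
  rcases N hwy with rfl | rfl | rfl
  · exact hne₂₁ (eq_of_adj_of_adj_of_triangle hDia hK4 h₂₃ h₁₂.symm h₁₃.symm h₂ hw)
  · exact hw'.2.2 rfl
  · exact hw'.1 rfl

theorem false_of_triangle_pendants_of_common_neighbor [Fintype V] (hconn : G.Connected)
    (hB : _root_.Free G bull) (hDia : _root_.Free G diamond) (hK4 : _root_.Free G K4)
    (hK23 : _root_.Free G K23) (hdom : 3 ≤ domNum G) {x₁ x₂ x₃ y₁ y₂ s : V}
    (h₁₂ : G.Adj x₁ x₂) (h₁₃ : G.Adj x₁ x₃) (h₂₃ : G.Adj x₂ x₃)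
    (hy₁ : G.Adj x₁ y₁) (hy₁₂ : y₁ ≠ x₂) (hy₁₃ : y₁ ≠ x₃)
    (hy₂ : G.Adj x₂ y₂) (hy₂₁ : y₂ ≠ x₁) (hy₂₃ : y₂ ≠ x₃)
    (hs₁ : G.Adj y₁ s) (hs₂ : G.Adj y₂ s) : False := by
  have hy : G.Adj y₁ y₂ :=
    adj_of_triangle_pendants hB hDia hK4 h₁₂ h₁₃ h₂₃ hy₁ hy₁₂ hy₁₃ hy₂ hy₂₁ hy₂₃
  have hsx₁ : s ≠ x₁ := by
    rintro rfl
    exact hy₂₃ (eq_of_adj_of_adj_of_triangle hDia hK4 h₁₂ h₁₃ h₂₃ hs₂.symm hy₂)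
  have hsx₂ : s ≠ x₂ := by
    rintro rfl
    exact hy₁₃ (eq_of_adj_of_adj_of_triangle hDia hK4 h₁₂ h₁₃ h₂₃ hy₁ hs₁.symm)
  have N₁ : G.neighborSet x₁ ⊆ {x₂, x₃, y₁} := neighborSet_subset_of_triangle_pendants
    hB hDia hK4 hK23 h₁₂ h₁₃ h₂₃ hy₁ hy₁₂ hy₁₃ hy₂ hy₂₁ hy₂₃
  have N₂ : G.neighborSet x₂ ⊆ {x₁, x₃, y₂} := neighborSet_subset_of_triangle_pendants
    hB hDia hK4 hK23 h₁₂.symm h₂₃ h₁₃ hy₂ hy₂₁ hy₂₃ hy₁ hy₁₂ hy₁₃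
  have N₃ : G.neighborSet x₃ ⊆ {x₁, x₂, s} := neighborSet_subset_of_adj_triangles
    hB hDia hK4 hK23 h₁₂ h₁₃ h₂₃ hy hs₁ hs₂ hy₁ hy₂ hy₁₂ hy₁₃ hy₂₁ hsx₁ hsx₂
  have M₁ : G.neighborSet y₁ ⊆ {y₂, s, x₁} := neighborSet_subset_of_triangle_pendants
    hB hDia hK4 hK23 hy hs₁ hs₂ hy₁.symm hy₂₁.symm hsx₁.symm hy₂.symm hy₁₂.symm hsx₂.symm
  have M₂ : G.neighborSet y₂ ⊆ {y₁, s, x₂} := neighborSet_subset_of_triangle_pendants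
    hB hDia hK4 hK23 hy.symm hs₂ hs₁ hy₂.symm hy₁₂.symm hsx₂.symm hy₁.symm hy₂₁.symm hsx₁.symm
  have Mₛ : G.neighborSet s ⊆ {y₁, y₂, x₃} := neighborSet_subset_of_adj_triangles
    hB hDia hK4 hK23 hy hs₁ hs₂ h₁₂ h₁₃ h₂₃ hy₁.symm hy₂.symm hy₂₁.symm hsx₁.symm hy₁₂.symm
    hy₁₃.symm hy₂₃.symm
  have hall (v : V) : v ∈ ({x₁, x₂, x₃, y₁, y₂, s} : Set V) := by
    refine hconn.mem_of_neighborSet_subset (a := x₁) (by simp) (fun u hu => ?_) v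
    rcases hu with rfl | rfl | rfl | rfl | rfl | rfl
    · exact N₁.trans (by simp [Set.insert_subset_iff])
    · exact N₂.trans (by simp [Set.insert_subset_iff])
    · exact N₃.trans (by simp [Set.insert_subset_iff])
    · exact M₁.trans (by simp [Set.insert_subset_iff])
    · exact M₂.trans (by simp [Set.insert_subset_iff])
    · exact Mₛ.trans (by simp [Set.insert_subset_iff])
  have : domNum G ≤ 2 := domNum_le_two (a := y₁) (b := x₂) fun v => by
    rcases hall v with rfl | rfl | rfl | rfl | rfl | rfl <;> simp_all [G.adj_comm]
  omega

/-- The house on the square `x₁ y₁ y₂ x₂` with roof `x₃`, where the roof triangle `x₁ x₂ x₃`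
has no neighbours outside the house. -/
structure IsHouse (G : SimpleGraph V) (x₁ x₂ x₃ y₁ y₂ : V) : Prop where
  adj₁₂ : G.Adj x₁ x₂
  adj₁₃ : G.Adj x₁ x₃
  adj₂₃ : G.Adj x₂ x₃
  adj₁ : G.Adj x₁ y₁
  adj₂ : G.Adj x₂ y₂
  adj_y : G.Adj y₁ y₂
  ne₁₂ : y₁ ≠ x₂
  ne₁₃ : y₁ ≠ x₃
  ne₂₁ : y₂ ≠ x₁
  ne₂₃ : y₂ ≠ x₃
  nbr₁ : G.neighborSet x₁ ⊆ {x₂, x₃, y₁}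
  nbr₂ : G.neighborSet x₂ ⊆ {x₁, x₃, y₂}
  nbr₃ : G.neighborSet x₃ ⊆ {x₁, x₂}

namespace IsHouse

variable {x₁ x₂ x₃ y₁ y₂ : V}

theorem symm (h : IsHouse G x₁ x₂ x₃ y₁ y₂) : IsHouse G x₂ x₁ x₃ y₂ y₁ where
  adj₁₂ := h.adj₁₂.symm
  adj₁₃ := h.adj₂₃
  adj₂₃ := h.adj₁₃
  adj₁ := h.adj₂
  adj₂ := h.adj₁
  adj_y := h.adj_y.symm
  ne₁₂ := h.ne₂₁
  ne₁₃ := h.ne₂₃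
  ne₂₁ := h.ne₁₂
  ne₂₃ := h.ne₁₃
  nbr₁ := h.nbr₂
  nbr₂ := h.nbr₁
  nbr₃ := Set.pair_comm x₁ x₂ ▸ h.nbr₃

theorem not_adj_y₁ (h : IsHouse G x₁ x₂ x₃ y₁ y₂) : ¬G.Adj x₂ y₁ ∧ ¬G.Adj x₃ y₁ := by
  refine ⟨fun hy => ?_, fun hy => ?_⟩
  · rcases h.nbr₂ hy with rfl | rfl | rfl
    exacts [h.adj₁.ne rfl, h.ne₁₃ rfl, h.adj_y.ne rfl]
  · rcases h.nbr₃ hy with rfl | rfl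
    exacts [h.adj₁.ne rfl, h.ne₁₂ rfl]

theorem not_adj_of_notMem (h : IsHouse G x₁ x₂ x₃ y₁ y₂) {v : V}
    (hv : v ∉ ({x₁, x₂, x₃, y₁, y₂} : Set V)) :
    ¬G.Adj x₁ v ∧ ¬G.Adj x₂ v ∧ ¬G.Adj x₃ v := by
  refine ⟨fun hx => hv ?_, fun hx => hv ?_, fun hx => hv ?_⟩
  · rcases h.nbr₁ hx with rfl | rfl | rfl <;> simp
  · rcases h.nbr₂ hx with rfl | rfl | rfl <;> simp
  · rcases h.nbr₃ hx with rfl | rfl <;> simp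

theorem false_of_adj_of_adj (h : IsHouse G x₁ x₂ x₃ y₁ y₂) (hP2P3 : _root_.Free G P2P3)
    (hF1 : _root_.Free G F1) {s u : V} (hs : G.Adj y₁ s) (hu : G.Adj y₂ u)
    (hs' : s ∉ ({x₁, x₂, x₃, y₁, y₂} : Set V)) (hu' : u ∉ ({x₁, x₂, x₃, y₁, y₂} : Set V))
    (hsy : ¬G.Adj y₂ s) (huy : ¬G.Adj y₁ u) : False := by
  obtain ⟨hs₁, hs₂, hs₃⟩ := h.not_adj_of_notMem hs'
  obtain ⟨hu₁, hu₂, hu₃⟩ := h.not_adj_of_notMem hu'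
  obtain ⟨hy₂, hy₃⟩ := h.not_adj_y₁
  obtain ⟨hy₁', hy₃'⟩ := h.symm.not_adj_y₁
  obtain ⟨h₁₂, -, h₂₃, hx₁, hx₂, hy, -, -, n₂₁, n₂₃, -, -, -⟩ := h
  simp only [Set.mem_insert_iff, Set.mem_singleton_iff, not_or] at hs' hu'
  by_cases hsu : G.Adj s u
  · refine hP2P3.false_of_map (fun x => ![![x₁, y₁, s], ![x₂, y₂, u]] x.1 x.2)
      fun i j hij => ?_
    fin_cases i <;> fin_cases j <;> simp [P2P3, boxProd_adj, pathGraph_adj] at hij ⊢ <;>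
      grind [Adj.ne, Adj.symm]
  · refine hF1.false_of_map ![y₁, y₂, x₂, s, u, x₃] fun i j hij => ?_
    fin_cases i <;> fin_cases j <;> simp [F1, graphOfList] at hij ⊢ <;> grind [Adj.ne, Adj.symm]

theorem adj_of_far_path (h : IsHouse G x₁ x₂ x₃ y₁ y₂) (hP7 : _root_.Free G P7)
    (hy₂ : G.neighborSet y₂ ⊆ {x₁, x₂, x₃, y₁, y₂}) {s p t : V} (hs : G.Adj y₁ s)
    (hsp : G.Adj s p) (hpt : G.Adj p t) (hs' : s ∉ ({x₁, x₂, x₃, y₁, y₂} : Set V))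
    (hp' : p ∉ ({x₁, x₂, x₃, y₁, y₂} : Set V)) (ht' : t ∉ ({x₁, x₂, x₃, y₁, y₂} : Set V))
    (hp : ¬G.Adj y₁ p) (ht : ¬G.Adj y₁ t) : G.Adj s t := by
  by_contra hst
  obtain ⟨-, hs₂, hs₃⟩ := h.not_adj_of_notMem hs'
  obtain ⟨-, hp₂, hp₃⟩ := h.not_adj_of_notMem hp'
  obtain ⟨-, ht₂, ht₃⟩ := h.not_adj_of_notMem ht'
  have hsy : ¬G.Adj y₂ s := fun hv => hs' (hy₂ hv)
  have hpy : ¬G.Adj y₂ p := fun hv => hp' (hy₂ hv)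
  have hty : ¬G.Adj y₂ t := fun hv => ht' (hy₂ hv)
  obtain ⟨hy₂₁, hy₃₁⟩ := h.not_adj_y₁
  obtain ⟨-, hy₃₂⟩ := h.symm.not_adj_y₁
  obtain ⟨-, -, h₂₃, -, hx₂, hy, -, -, -, -, -, -, -⟩ := h
  simp only [Set.mem_insert_iff, Set.mem_singleton_iff, not_or] at hs' hp' ht'
  refine hP7.false_of_map ![t, p, s, y₁, y₂, x₂, x₃] fun i j hij => ?_
  fin_cases i <;> fin_cases j <;> simp [P7, pathGraph_adj] at hij ⊢ <;> grind [Adj.ne, Adj.symm]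

theorem mem_or_adj_or_adj (h : IsHouse G x₁ x₂ x₃ y₁ y₂) (hconn : G.Connected)
    (hP7 : _root_.Free G P7) (hy₂ : G.neighborSet y₂ ⊆ {x₁, x₂, x₃, y₁, y₂}) (v : V) :
    v ∈ ({x₁, x₂, x₃, y₁, y₂} : Set V) ∨ G.Adj y₁ v ∨
      ∃ s, G.Adj y₁ s ∧ s ∉ ({x₁, x₂, x₃, y₁, y₂} : Set V) ∧ G.Adj s v := by
  set H : Set V := {x₁, x₂, x₃, y₁, y₂}
  have hexit : ∀ u ∈ H, ∀ v, G.Adj u v → v ∉ H → u = y₁ := by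
    rintro u (rfl | rfl | rfl | rfl | rfl) v huv hv
    · exact absurd huv (h.not_adj_of_notMem hv).1
    · exact absurd huv (h.not_adj_of_notMem hv).2.1
    · exact absurd huv (h.not_adj_of_notMem hv).2.2
    · rfl
    · exact absurd (hy₂ huv) hv
  refine hconn.mem_of_neighborSet_subset (a := x₁)
    (S := {v | v ∈ H ∨ G.Adj y₁ v ∨ ∃ s, G.Adj y₁ s ∧ s ∉ H ∧ G.Adj s v})
    (Or.inl (by simp [H])) (fun u hu v (huv : G.Adj u v) => ?_) v
  by_cases hv : v ∈ H
  · exact Or.inl hv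
  by_cases hyv : G.Adj y₁ v
  · exact Or.inr (Or.inl hyv)
  by_cases huH : u ∈ H
  · exact absurd (hexit u huH v huv hv ▸ huv) hyv
  by_cases hyu : G.Adj y₁ u
  · exact Or.inr (Or.inr ⟨u, hyu, huH, huv⟩)
  rcases hu with hu | hu | ⟨s, hs, hsH, hsu⟩
  · exact absurd hu huH
  · exact absurd hu hyu
  · exact Or.inr (Or.inr ⟨s, hs, hsH, h.adj_of_far_path hP7 hy₂ hs hsu huv hsH huH hv hyu hyv⟩)

theorem eq_of_adj_of_not_adj (h : IsHouse G x₁ x₂ x₃ y₁ y₂) (hB : _root_.Free G bull)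
    (hDia : _root_.Free G diamond) (hK4 : _root_.Free G K4) (hF1 : _root_.Free G F1)
    (hF4 : _root_.Free G F4) (hy₂ : G.neighborSet y₂ ⊆ {x₁, x₂, x₃, y₁, y₂}) {s s' t : V}
    (hs : G.Adj y₁ s) (hs' : G.Adj y₁ s') (hst : G.Adj s t)
    (hsH : s ∉ ({x₁, x₂, x₃, y₁, y₂} : Set V)) (hs'H : s' ∉ ({x₁, x₂, x₃, y₁, y₂} : Set V))
    (htH : t ∉ ({x₁, x₂, x₃, y₁, y₂} : Set V)) (ht : ¬G.Adj y₁ t) : s' = s := by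
  by_contra hne
  obtain ⟨hs₁, hs₂, hs₃⟩ := h.not_adj_of_notMem hsH
  obtain ⟨hs'₁, hs'₂, hs'₃⟩ := h.not_adj_of_notMem hs'H
  obtain ⟨ht₁, ht₂, ht₃⟩ := h.not_adj_of_notMem htH
  have hsy : ¬G.Adj y₂ s := fun hv => hsH (hy₂ hv)
  have hs'y : ¬G.Adj y₂ s' := fun hv => hs'H (hy₂ hv)
  have hty : ¬G.Adj y₂ t := fun hv => htH (hy₂ hv)
  obtain ⟨hy₂₁, -⟩ := h.not_adj_y₁
  obtain ⟨hy₁₂, -⟩ := h.symm.not_adj_y₁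
  obtain ⟨h₁₂, -, -, hx₁, hx₂, hy, -, -, n₂₁, -, -, -, -⟩ := h
  simp only [Set.mem_insert_iff, Set.mem_singleton_iff, not_or] at hsH hs'H htH
  have hts' : t ≠ s' := by
    rintro rfl
    exact ht hs'
  have hss' : ¬G.Adj s s' := fun hss' => ht₁ (adj_of_triangle_pendants hB hDia hK4 hs.symm hss'
    hs' hst htH.2.2.2.1 hts' hx₁.symm (Ne.symm hsH.1) (Ne.symm hs'H.1)).symm
  have hs't : ¬G.Adj s' t := fun hs't => by
    refine hF4.false_of_map ![y₁, x₁, x₂, y₂, s, t, s'] fun i j hij => ?_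
    fin_cases i <;> fin_cases j <;> simp [F4, graphOfList] at hij ⊢ <;> grind [Adj.ne, Adj.symm]
  refine hF1.false_of_map ![y₂, y₁, s, x₂, s', t] fun i j hij => ?_
  fin_cases i <;> fin_cases j <;> simp [F1, graphOfList] at hij ⊢ <;> grind [Adj.ne, Adj.symm]

theorem dominated_of_mem (h : IsHouse G x₁ x₂ x₃ y₁ y₂) {d v : V} (hd : d = y₁ ∨ G.Adj d y₁)
    (hv : v ∈ ({x₁, x₂, x₃, y₁, y₂} : Set V)) : v = d ∨ v = x₂ ∨ G.Adj d v ∨ G.Adj x₂ v := by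
  rcases hv with rfl | rfl | rfl | rfl | rfl
  · exact .inr (.inr (.inr h.adj₁₂.symm))
  · exact .inr (.inl rfl)
  · exact .inr (.inr (.inr h.adj₂₃))
  · exact hd.imp Eq.symm (fun hd => .inr (.inl hd))
  · exact .inr (.inr (.inr h.adj₂))

theorem false_of_neighborSet_subset [Fintype V] (h : IsHouse G x₁ x₂ x₃ y₁ y₂)
    (hconn : G.Connected) (hB : _root_.Free G bull) (hDia : _root_.Free G diamond)
    (hK4 : _root_.Free G K4) (hP7 : _root_.Free G P7) (hF1 : _root_.Free G F1)
    (hF4 : _root_.Free G F4) (hdom : 3 ≤ domNum G)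
    (hy₂ : G.neighborSet y₂ ⊆ {x₁, x₂, x₃, y₁, y₂}) : False := by
  set H : Set V := {x₁, x₂, x₃, y₁, y₂}
  have hall := h.mem_or_adj_or_adj hconn hP7 hy₂
  suffices ∃ d, ∀ v, v = d ∨ v = x₂ ∨ G.Adj d v ∨ G.Adj x₂ v by
    obtain ⟨d, hd⟩ := this
    have := domNum_le_two hd
    omega
  by_cases hT : ∃ s t, G.Adj y₁ s ∧ s ∉ H ∧ G.Adj s t ∧ t ∉ H ∧ ¬G.Adj y₁ t
  · obtain ⟨s, t, hs, hsH, hst, htH, ht⟩ := hT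
    have huniq {s' : V} (hs' : G.Adj y₁ s') (hs'H : s' ∉ H) : s' = s :=
      h.eq_of_adj_of_not_adj hB hDia hK4 hF1 hF4 hy₂ hs hs' hst hsH hs'H htH ht
    refine ⟨s, fun v => ?_⟩
    rcases hall v with hv | hv | ⟨s', hs', hs'H, hv⟩
    · exact h.dominated_of_mem (.inr hs.symm) hv
    · by_cases hvH : v ∈ H
      · exact h.dominated_of_mem (.inr hs.symm) hvH
      · exact .inl (huniq hv hvH)
    · exact .inr (.inr (.inl (huniq hs' hs'H ▸ hv)))
  · refine ⟨y₁, fun v => ?_⟩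
    rcases hall v with hv | hv | ⟨s, hs, hsH, hv⟩
    · exact h.dominated_of_mem (.inl rfl) hv
    · exact .inr (.inr (.inl hv))
    · by_cases hvH : v ∈ H
      · exact h.dominated_of_mem (.inl rfl) hvH
      by_cases hyv : G.Adj y₁ v
      · exact .inr (.inr (.inl hyv))
      · exact absurd ⟨s, v, hs, hsH, hv, hvH, hyv⟩ hT

end IsHouse

theorem false_of_triangle_pendants [Fintype V] (hconn : G.Connected) (hB : _root_.Free G bull)
    (hDia : _root_.Free G diamond) (hK4 : _root_.Free G K4) (hK23 : _root_.Free G K23)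
    (hP2P3 : _root_.Free G P2P3) (hP7 : _root_.Free G P7) (hF1 : _root_.Free G F1)
    (hF4 : _root_.Free G F4) (hdom : 3 ≤ domNum G) {x₁ x₂ x₃ y₁ y₂ : V}
    (h₁₂ : G.Adj x₁ x₂) (h₁₃ : G.Adj x₁ x₃) (h₂₃ : G.Adj x₂ x₃)
    (hy₁ : G.Adj x₁ y₁) (hy₁₂ : y₁ ≠ x₂) (hy₁₃ : y₁ ≠ x₃)
    (hy₂ : G.Adj x₂ y₂) (hy₂₁ : y₂ ≠ x₁) (hy₂₃ : y₂ ≠ x₃) : False := by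
  have hcommon (s : V) (hs₁ : G.Adj y₁ s) (hs₂ : G.Adj y₂ s) : False :=
    false_of_triangle_pendants_of_common_neighbor hconn hB hDia hK4 hK23 hdom h₁₂ h₁₃ h₂₃
      hy₁ hy₁₂ hy₁₃ hy₂ hy₂₁ hy₂₃ hs₁ hs₂
  have N₃ : G.neighborSet x₃ ⊆ {x₁, x₂} := by
    intro z (hz : G.Adj x₃ z)
    by_contra hz'
    simp only [Set.mem_insert_iff, Set.mem_singleton_iff, not_or] at hz'
    exact hcommon z
      (adj_of_triangle_pendants hB hDia hK4 h₁₃ h₁₂ h₂₃.symm hy₁ hy₁₃ hy₁₂ hz hz'.1 hz'.2)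
      (adj_of_triangle_pendants hB hDia hK4 h₂₃ h₁₂.symm h₁₃.symm hy₂ hy₂₃ hy₂₁ hz hz'.2 hz'.1)
  have house : IsHouse G x₁ x₂ x₃ y₁ y₂ :=
    ⟨h₁₂, h₁₃, h₂₃, hy₁, hy₂,
      adj_of_triangle_pendants hB hDia hK4 h₁₂ h₁₃ h₂₃ hy₁ hy₁₂ hy₁₃ hy₂ hy₂₁ hy₂₃,
      hy₁₂, hy₁₃, hy₂₁, hy₂₃,
      neighborSet_subset_of_triangle_pendants hB hDia hK4 hK23 h₁₂ h₁₃ h₂₃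
        hy₁ hy₁₂ hy₁₃ hy₂ hy₂₁ hy₂₃,
      neighborSet_subset_of_triangle_pendants hB hDia hK4 hK23 h₁₂.symm h₂₃ h₁₃
        hy₂ hy₂₁ hy₂₃ hy₁ hy₁₂ hy₁₃, N₃⟩
  by_cases hA₂ : G.neighborSet y₂ ⊆ {x₁, x₂, x₃, y₁, y₂}
  · exact house.false_of_neighborSet_subset hconn hB hDia hK4 hP7 hF1 hF4 hdom hA₂
  by_cases hA₁ : G.neighborSet y₁ ⊆ {x₂, x₁, x₃, y₂, y₁}
  · exact house.symm.false_of_neighborSet_subset hconn hB hDia hK4 hP7 hF1 hF4 hdom hA₁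
  obtain ⟨s, hs, hsH⟩ := Set.not_subset.1 hA₁
  obtain ⟨u, hu, huH⟩ := Set.not_subset.1 hA₂
  refine house.false_of_adj_of_adj hP2P3 hF1 hs hu ?_ huH (hcommon s hs) (hcommon u · hu)
  simp only [Set.mem_insert_iff, Set.mem_singleton_iff, not_or] at hsH ⊢
  tauto

theorem neighborSet_subset_of_not_subset [Fintype V] (hconn : G.Connected)
    (hB : _root_.Free G bull) (hDia : _root_.Free G diamond) (hK4 : _root_.Free G K4)
    (hK23 : _root_.Free G K23) (hP2P3 : _root_.Free G P2P3) (hP7 : _root_.Free G P7)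
    (hF1 : _root_.Free G F1) (hF4 : _root_.Free G F4) (hdom : 3 ≤ domNum G) {a b c : V}
    (hab : G.Adj a b) (hac : G.Adj a c) (hbc : G.Adj b c) (ha : ¬G.neighborSet a ⊆ {b, c}) :
    G.neighborSet b ⊆ {a, c} := by
  intro q (hq : G.Adj b q)
  by_contra hq'
  obtain ⟨p, hp, hp'⟩ := Set.not_subset.1 ha
  simp only [Set.mem_insert_iff, Set.mem_singleton_iff, not_or] at hp' hq'
  exact false_of_triangle_pendants hconn hB hDia hK4 hK23 hP2P3 hP7 hF1 hF4 hdom hab hac hbc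
    hp hp'.1 hp'.2 hq hq'.1 hq'.2

theorem degree_eq_two [Fintype V] [DecidableRel G.Adj] {a b c : V} (hab : G.Adj a b)
    (hac : G.Adj a c) (hbc : b ≠ c) (h : G.neighborSet a ⊆ {b, c}) : G.degree a = 2 := by
  classical
  rw [← card_neighborFinset_eq_degree, Finset.card_eq_two]
  refine ⟨b, c, hbc, Finset.ext fun v => ?_⟩
  simp only [mem_neighborFinset, Finset.mem_insert, Finset.mem_singleton]
  exact ⟨fun hv => h hv, by rintro (rfl | rfl); exacts [hab, hac]⟩

end

theorem claim4_general {V : Type*} [Fintype V] (G : SimpleGraph V) [DecidableRel G.Adj]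
    (hconn : G.Connected)
    (hB : _root_.Free G bull) (hDia : _root_.Free G diamond) (hK4 : _root_.Free G K4) (hK23 : _root_.Free G K23)
    (hP2P3 : _root_.Free G P2P3) (hP7 : _root_.Free G P7) (hF1 : _root_.Free G F1)
    (hF4 : _root_.Free G F4)
    (hdom : 3 ≤ domNum G) :
    ∀ x₁ x₂ x₃ : V, G.Adj x₁ x₂ → G.Adj x₂ x₃ → G.Adj x₁ x₃ →
      ∃ a ∈ ({x₁, x₂, x₃} : Set V), ∃ b ∈ ({x₁, x₂, x₃} : Set V),
        a ≠ b ∧ G.degree a = 2 ∧ G.degree b = 2 := by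
  intro x₁ x₂ x₃ h₁₂ h₂₃ h₁₃
  have other {a b c : V} (hab : G.Adj a b) (hac : G.Adj a c) (hbc : G.Adj b c)
      (ha : ¬G.neighborSet a ⊆ {b, c}) : G.neighborSet b ⊆ {a, c} :=
    neighborSet_subset_of_not_subset hconn hB hDia hK4 hK23 hP2P3 hP7 hF1 hF4 hdom hab hac hbc ha
  by_cases h₁ : G.neighborSet x₁ ⊆ {x₂, x₃}
  · by_cases h₂ : G.neighborSet x₂ ⊆ {x₁, x₃}
    · exact ⟨x₁, by simp, x₂, by simp, h₁₂.ne, degree_eq_two h₁₂ h₁₃ h₂₃.ne h₁,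
        degree_eq_two h₁₂.symm h₂₃ h₁₃.ne h₂⟩
    · rw [Set.pair_comm] at h₂
      exact ⟨x₁, by simp, x₃, by simp, h₁₃.ne, degree_eq_two h₁₂ h₁₃ h₂₃.ne h₁,
        degree_eq_two h₂₃.symm h₁₃.symm h₁₂.ne.symm (other h₂₃ h₁₂.symm h₁₃.symm h₂)⟩
  · have h₂ := other h₁₂ h₁₃ h₂₃ h₁
    rw [Set.pair_comm] at h₁
    exact ⟨x₂, by simp, x₃, by simp, h₂₃.ne, degree_eq_two h₁₂.symm h₂₃ h₁₃.ne h₂,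
      degree_eq_two h₁₃.symm h₂₃.symm h₁₂.ne (other h₁₃ h₁₂ h₂₃.symm h₁)⟩

/-- Claim 4: in a connected `{B,D,K₄,K₂₃,P₂□P₃,P₇,C₇,F₁,…,F₅}`-free graph
with `γ(G) ≥ 3`, every triangle contains two vertices of degree exactly `2`. -/
theorem claim4 {V : Type*} [Fintype V] (G : SimpleGraph V) [DecidableRel G.Adj]
    (hconn : G.Connected)
    (hB : _root_.Free G bull) (hDia : _root_.Free G diamond) (hK4 : _root_.Free G K4) (hK23 : _root_.Free G K23)
    (hP2P3 : _root_.Free G P2P3) (hP7 : _root_.Free G P7) (hC7 : _root_.Free G C7) (hF1 : _root_.Free G F1)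
    (hF2 : _root_.Free G F2) (hF3 : _root_.Free G F3) (hF4 : _root_.Free G F4) (hF5 : _root_.Free G F5)
    (hdom : 3 ≤ domNum G) :
    ∀ x₁ x₂ x₃ : V, G.Adj x₁ x₂ → G.Adj x₂ x₃ → G.Adj x₁ x₃ →
      ∃ a ∈ ({x₁, x₂, x₃} : Set V), ∃ b ∈ ({x₁, x₂, x₃} : Set V),
        a ≠ b ∧ G.degree a = 2 ∧ G.degree b = 2 :=
  claim4_general G hconn hB hDia hK4 hK23 hP2P3 hP7 hF1 hF4 hdom
end
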